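/- arXiv:0911.4665 — 2 statements merged into one kernel-verified Lean document; each statement's English description precedes it below -/
import Mathlib

section
/- Bounded β-volume is inherited under quasi-isometry with rescaled radius: let h : L' → L be a quasi-isometry with constants C₀ ≥ 1, D > 0 between complete Riemannian manifolds with bounded sectional curvature, and suppose every ball of radius C₀(β'+D) in L can be covered by at most n₁ balls of radius β := C₀⁻¹(β'−D) (assuming β' > D). If a subset B' ⊆ L' can be covered by k' open β'-balls, then h(B') can be covered by at most n₁·k' open β-balls in L. -/
/-!
Each `β'`-ball of a cover of `B'` is mapped by `h` into a `C₀(β' + D)`-ball of `L`, by the lower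
quasi-isometry bound, and each of those is covered by `n₁` balls of radius `C₀⁻¹(β' - D)`.
-/

/-- `S` can be covered by at most `m` open balls of radius `β`. -/
def CoveredBy {L : Type*} [MetricSpace L] (S : Set L) (β : ℝ) (m : ℕ) : Prop :=
  ∃ s : Finset L, s.card ≤ m ∧ S ⊆ ⋃ y ∈ s, Metric.ball y β

open Metric

theorem CoveredBy.mono {L : Type*} [MetricSpace L] {S T : Set L} {β : ℝ} {m n : ℕ}
    (hST : S ⊆ T) (hmn : m ≤ n) (hT : CoveredBy T β m) : CoveredBy S β n :=
  let ⟨s, hs, hcov⟩ := hT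
  ⟨s, hs.trans hmn, hST.trans hcov⟩

theorem CoveredBy.of_subset_biUnion {L ι : Type*} [MetricSpace L] {S : Set L} {β : ℝ} {n : ℕ}
    (s : Finset ι) (T : ι → Set L) (hS : S ⊆ ⋃ i ∈ s, T i)
    (hT : ∀ i ∈ s, CoveredBy (T i) β n) : CoveredBy S β (n * s.card) := by
  classical
  choose! t ht htcov using hT
  refine ⟨s.biUnion t, ?_, ?_⟩
  · rw [mul_comm]
    exact s.card_biUnion_le_card_mul t n ht
  · refine hS.trans (Set.iUnion₂_subset fun i hi => (htcov i hi).trans ?_)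
    exact Set.biUnion_mono (Finset.coe_subset.mpr (Finset.subset_biUnion_of_mem t hi))
      fun _ _ => subset_rfl

theorem image_ball_subset_ball_of_dist_le {α β : Type*} [PseudoMetricSpace α]
    [PseudoMetricSpace β] {f : α → β} {C D : ℝ} (hC : 0 < C)
    (hf : ∀ x y, C⁻¹ * dist (f x) (f y) - D ≤ dist x y) (x : α) (r : ℝ) :
    f '' ball x r ⊆ ball (f x) (C * (r + D)) := by
  rintro _ ⟨y, hy, rfl⟩
  rw [mem_ball] at hy ⊢
  have hlt : C⁻¹ * dist (f y) (f x) < r + D := by linarith [hf y x]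
  rwa [inv_mul_lt_iff₀ hC] at hlt

theorem coveredBy_image_of_quasiIsometry_general {L L' : Type*} [MetricSpace L] [MetricSpace L']
    (h : L' → L) (C₀ D β' : ℝ)
    (hC : 1 ≤ C₀)
    (hqi : ∀ x' y' : L', C₀⁻¹ * dist (h x') (h y') - D ≤ dist x' y' ∧
      dist x' y' ≤ C₀ * dist (h x') (h y') + D)
    (n₁ : ℕ)
    (hn₁ : ∀ x : L, CoveredBy (Metric.ball x (C₀ * (β' + D))) (C₀⁻¹ * (β' - D)) n₁)
    (B' : Set L') (k' : ℕ) (hB' : CoveredBy B' β' k') :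
    CoveredBy (h '' B') (C₀⁻¹ * (β' - D)) (n₁ * k') := by
  obtain ⟨s, hs, hcov⟩ := hB'
  have himage : h '' B' ⊆ ⋃ y ∈ s, h '' ball y β' := by
    simpa only [Set.image_iUnion₂] using Set.image_mono hcov
  have hball : ∀ y ∈ s, CoveredBy (h '' ball y β') (C₀⁻¹ * (β' - D)) n₁ := fun y _ =>
    (hn₁ (h y)).mono
      (image_ball_subset_ball_of_dist_le (by linarith) (fun x' y' => (hqi x' y').1) y β') le_rfl
  exact (CoveredBy.of_subset_biUnion s _ himage hball).mono subset_rfl (Nat.mul_le_mul_left n₁ hs)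

/-- Bounded `β`-volume is inherited under quasi-isometry with rescaled radius: if
`h : L' → L` is a quasi-isometry with constants `C₀ ≥ 1`, `D > 0`, every ball of radius
`C₀(β'+D)` in `L` is covered by `n₁` balls of radius `β = C₀⁻¹(β'−D)` (with `β' > D`),
and `B' ⊆ L'` is covered by `k'` open `β'`-balls, then `h '' B'` is covered by at most
`n₁·k'` open `β`-balls. -/
theorem coveredBy_image_of_quasiIsometry {L L' : Type*} [MetricSpace L] [MetricSpace L']
    (h : L' → L) (hbij : Function.Bijective h) (C₀ D β' : ℝ)
    (hC : 1 ≤ C₀) (hD : 0 < D) (hβ' : D < β')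
    (hqi : ∀ x' y' : L', C₀⁻¹ * dist (h x') (h y') - D ≤ dist x' y' ∧
      dist x' y' ≤ C₀ * dist (h x') (h y') + D)
    (n₁ : ℕ)
    (hn₁ : ∀ x : L, CoveredBy (Metric.ball x (C₀ * (β' + D))) (C₀⁻¹ * (β' - D)) n₁)
    (B' : Set L') (k' : ℕ) (hB' : CoveredBy B' β' k') :
    CoveredBy (h '' B') (C₀⁻¹ * (β' - D)) (n₁ * k') :=
  coveredBy_image_of_quasiIsometry_general h C₀ D β' hC hqi n₁ hn₁ B' k' hB'
end

section
/- Let (C_n) be a family of compact connected codimension-0 submanifolds-with-boundary of a (possibly noncompact) connected manifold L, whose boundaries B_n = ∂C_n are pairwise disjoint connected separating hypersurfaces, and suppose a fixed nonempty connected open set V ⊆ L is contained in every C_n, with V disjoint from every B_n. Then the sets C_n are nested: for any m, n, either C_n ⊆ C_m or C_m ⊆ C_n. -/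
/-! A connected set missing the frontier of `t` lies either in the interior of `t` or outside
its closure. Apply this to the connected frontier of `C n`, which misses the frontier of `C m`:
if it lies outside `C m`, then the connected set `C m` misses the frontier of `C n`, and since
both regions contain `V`, `C m ⊆ C n`; symmetrically with `m` and `n` exchanged. In the remaining
case each frontier lies in the interior of the other region, so `C m ∪ C n` is open; being also
closed, nonempty and compact, it would be the whole connected space, which is not compact. -/

open Set

section

variable {X : Type*} [TopologicalSpace X] {s t : Set X}

theorem IsPreconnected.subset_interior_or_disjoint_closure (hs : IsPreconnected s)
    (hst : Disjoint s (frontier t)) : s ⊆ interior t ∨ Disjoint s (closure t) := by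
  refine (hs.subset_or_subset isOpen_interior isClosed_closure.isOpen_compl
    (disjoint_compl_right_iff_subset.mpr interior_subset_closure) fun x hx => ?_).imp_right
    subset_compl_iff_disjoint_right.mp
  by_cases hxt : x ∈ closure t
  · exact Or.inl <| by_contra fun hxi => hst.ne_of_mem hx ⟨hxt, hxi⟩ rfl
  · exact Or.inr hxt

theorem IsPreconnected.subset_interior_of_disjoint_frontier (hs : IsPreconnected s)
    (hst : Disjoint s (frontier t)) (hmeet : (s ∩ t).Nonempty) : s ⊆ interior t := by
  refine (hs.subset_interior_or_disjoint_closure hst).resolve_right fun hdisj => ?_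
  obtain ⟨x, hxs, hxt⟩ := hmeet
  exact hdisj.ne_of_mem hxs (subset_closure hxt) rfl

theorem subset_interior_union_of_frontier_subset (hs : frontier s ⊆ interior t) :
    s ⊆ interior s ∪ interior t :=
  subset_closure.trans <| closure_eq_interior_union_frontier s ▸ union_subset_union_right _ hs

theorem isOpen_union_of_frontier_subset_interior (hs : frontier s ⊆ interior t)
    (ht : frontier t ⊆ interior s) : IsOpen (s ∪ t) := by
  have hst : s ∪ t ⊆ interior s ∪ interior t := union_subset
    (subset_interior_union_of_frontier_subset hs)
    (union_comm (interior s) _ ▸ subset_interior_union_of_frontier_subset ht)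
  rw [hst.antisymm (union_subset_union interior_subset interior_subset)]
  exact isOpen_interior.union isOpen_interior

end

theorem regions_nested_general {L : Type*} [TopologicalSpace L]
    [ConnectedSpace L] (hnc : ¬ CompactSpace L)
    (C : ℕ → Set L) (hcl : ∀ n, IsClosed (C n)) (hcpt : ∀ n, IsCompact (C n))
    (hconn : ∀ n, IsConnected (C n))
    (hfr : ∀ n, IsConnected (frontier (C n)))
    (hdisj : ∀ m n, m ≠ n → Disjoint (frontier (C m)) (frontier (C n)))
    (V : Set L) (hV : V.Nonempty)
    (hVsub : ∀ n, V ⊆ C n) :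
    ∀ m n, C n ⊆ C m ∨ C m ⊆ C n := by
  have : NoncompactSpace L := not_compactSpace_iff.mp hnc
  have hmeet (m n : ℕ) : (C m ∩ C n).Nonempty :=
    hV.mono (subset_inter (hVsub m) (hVsub n))
  have hnested (m n : ℕ) (hfr_out : Disjoint (frontier (C n)) (closure (C m))) : C m ⊆ C n :=
    ((hconn m).isPreconnected.subset_interior_of_disjoint_frontier
      (hfr_out.mono_right subset_closure).symm (hmeet m n)).trans interior_subset
  intro m n
  rcases eq_or_ne m n with rfl | hmn
  · exact Or.inl subset_rfl
  rcases (hfr n).isPreconnected.subset_interior_or_disjoint_closure (hdisj n m hmn.symm)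
    with hn_int | hn_out
  · rcases (hfr m).isPreconnected.subset_interior_or_disjoint_closure (hdisj m n hmn)
      with hm_int | hm_out
    · exfalso
      have hclopen : IsClopen (C m ∪ C n) :=
        ⟨(hcl m).union (hcl n), isOpen_union_of_frontier_subset_interior hm_int hn_int⟩
      exact ((hcpt m).union (hcpt n)).ne_univ <|
        hclopen.eq_univ ((hmeet m n).mono (inter_subset_left.trans subset_union_left))
    · exact Or.inl (hnested n m hm_out)
  · exact Or.inr (hnested m n hn_out)

/-- Nesting of compact regions with disjoint connected separating boundaries: if the `C n`
are compact connected regions (closures of their interiors) in a connected noncompact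
manifold `L`, with pairwise disjoint connected frontiers, and a fixed nonempty connected
open set `V` is contained in every `C n` and disjoint from every frontier, then the `C n`
are nested. -/
theorem regions_nested {L : Type*} [TopologicalSpace L] [T2Space L]
    [ConnectedSpace L] (hnc : ¬ CompactSpace L)
    (C : ℕ → Set L) (hcl : ∀ n, IsClosed (C n)) (hcpt : ∀ n, IsCompact (C n))
    (hconn : ∀ n, IsConnected (C n)) (hreg : ∀ n, closure (interior (C n)) = C n)
    (hfr : ∀ n, IsConnected (frontier (C n)))
    (hdisj : ∀ m n, m ≠ n → Disjoint (frontier (C m)) (frontier (C n)))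
    (V : Set L) (hV : V.Nonempty) (hVo : IsOpen V) (hVc : IsConnected V)
    (hVsub : ∀ n, V ⊆ C n) (hVfr : ∀ n, Disjoint V (frontier (C n))) :
    ∀ m n, C n ⊆ C m ∨ C m ⊆ C n :=
  regions_nested_general hnc C hcl hcpt hconn hfr hdisj V hV hVsub
end
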